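/- Correctness of the constant-term coding predicate: the shadow predicate Const x (defined as: there exist s, k with SeqConst s k x, where SeqConst asserts that s is a finite sequence each of whose elements is either 0 or of the form q_Eats v w with v, w occurring earlier in the sequence, and x = s_k) holds if and only if x is the code of a variable-free term of the HF language. -/

import Mathlib

/-- Terms of the language of hereditarily finite set theory. -/
inductive Tm : Type where
  | Zero : Tm
  | Var : ℕ → Tm
  | Eats : Tm → Tm → Tm

/-- Formulas of the language of HF set theory (named-variable syntax). -/
inductive Fm : Type where
  | Mem : Tm → Tm → Fm
  | Eq : Tm → Tm → Fm
  | Disj : Fm → Fm → Fm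
  | Neg : Fm → Fm
  | Ex : ℕ → Fm → Fm

/-- Substitution of a term for a variable in a term. -/
def substTm (i : ℕ) (x : Tm) : Tm → Tm
  | .Zero => .Zero
  | .Var k => if i = k then x else .Var k
  | .Eats t u => .Eats (substTm i x t) (substTm i x u)

/-- Substitution of a term for a variable in a formula. -/
def substFm (i : ℕ) (x : Tm) : Fm → Fm
  | .Mem t u => .Mem (substTm i x t) (substTm i x u)
  | .Eq t u => .Eq (substTm i x t) (substTm i x u)
  | .Disj A B => .Disj (substFm i x A) (substFm i x B)
  | .Neg A => .Neg (substFm i x A)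
  | .Ex k A => if i = k then .Ex k A else .Ex k (substFm i x A)

/-- Free variables of a term. -/
def fvTm : Tm → Finset ℕ
  | .Zero => ∅
  | .Var k => {k}
  | .Eats t u => fvTm t ∪ fvTm u

/-- Free variables of a formula. -/
def fvFm : Fm → Finset ℕ
  | .Mem t u => fvTm t ∪ fvTm u
  | .Eq t u => fvTm t ∪ fvTm u
  | .Disj A B => fvFm A ∪ fvFm B
  | .Neg A => fvFm A
  | .Ex k A => fvFm A \ {k}

/-- All variables (free or bound) occurring in a formula. -/
def varsFm : Fm → Finset ℕ
  | .Mem t u => fvTm t ∪ fvTm u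
  | .Eq t u => fvTm t ∪ fvTm u
  | .Disj A B => varsFm A ∪ varsFm B
  | .Neg A => varsFm A
  | .Ex k A => insert k (varsFm A)

/-- Derived connectives. -/
def fmImp (A B : Fm) : Fm := .Disj (.Neg A) B
def fmConj (A B : Fm) : Fm := .Neg (.Disj (.Neg A) (.Neg B))
def fmIff (A B : Fm) : Fm := fmConj (fmImp A B) (fmImp B A)
def fmAll (i : ℕ) (A : Fm) : Fm := .Neg (.Ex i (.Neg A))
def fmAll2 (i : ℕ) (t : Tm) (A : Fm) : Fm := fmAll i (fmImp (.Mem (.Var i) t) A)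

/-- Falsehood: `0 ∈ 0`. -/
def fmFls : Fm := .Mem .Zero .Zero

/-- The subset relation `t ⊆ u`, via a bounded universal quantifier with a fresh variable. -/
def SubsetFm (t u : Tm) : Fm :=
  fmAll2 (((fvTm t ∪ fvTm u).sup id) + 1) t (.Mem (.Var (((fvTm t ∪ fvTm u).sup id) + 1)) u)

/-- Sentential (boolean) axioms. -/
inductive BoolAx : Fm → Prop where
  | ident (A) : BoolAx (fmImp A A)
  | disjI1 (A B) : BoolAx (fmImp A (.Disj A B))
  | disjCont (A) : BoolAx (fmImp (.Disj A A) A)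
  | disjAssoc (A B C) : BoolAx (fmImp (.Disj A (.Disj B C)) (.Disj (.Disj A B) C))
  | disjConj (A B C) : BoolAx (fmImp (.Disj C A) (fmImp (.Disj (.Neg C) B) (.Disj A B)))

/-- Equality axioms. -/
def EqAx (A : Fm) : Prop :=
  A = .Eq (.Var 1) (.Var 1) ∨
  A = fmImp (fmConj (.Eq (.Var 1) (.Var 2)) (.Eq (.Var 3) (.Var 4)))
        (fmImp (.Eq (.Var 1) (.Var 3)) (.Eq (.Var 2) (.Var 4))) ∨
  A = fmImp (fmConj (.Eq (.Var 1) (.Var 2)) (.Eq (.Var 3) (.Var 4)))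
        (fmImp (.Mem (.Var 1) (.Var 3)) (.Mem (.Var 2) (.Var 4))) ∨
  A = fmImp (fmConj (.Eq (.Var 1) (.Var 2)) (.Eq (.Var 3) (.Var 4)))
        (.Eq (.Eats (.Var 1) (.Var 3)) (.Eats (.Var 2) (.Var 4)))

/-- Specialisation axioms `A(i := x) → ∃i A`. -/
inductive SpecAx : Fm → Prop where
  | I (i : ℕ) (x : Tm) (A : Fm) : SpecAx (fmImp (substFm i x A) (.Ex i A))

/-- HF1: `z = 0 ↔ ∀x, x ∉ z`. -/
def HF1fm : Fm :=
  fmIff (.Eq (.Var 0) .Zero) (fmAll 1 (.Neg (.Mem (.Var 1) (.Var 0))))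

/-- HF2: `z = x ◁ y ↔ ∀u, u ∈ z ↔ u ∈ x ∨ u = y`. -/
def HF2fm : Fm :=
  fmIff (.Eq (.Var 0) (.Eats (.Var 1) (.Var 2)))
    (fmAll 3 (fmIff (.Mem (.Var 3) (.Var 0))
      (.Disj (.Mem (.Var 3) (.Var 1)) (.Eq (.Var 3) (.Var 2)))))

def HFAx (A : Fm) : Prop := A = HF1fm ∨ A = HF2fm

/-- The induction axiom scheme HF3. -/
inductive IndAx : Fm → Prop where
  | ind (i j : ℕ) (A : Fm) : j ≠ i → j ∉ fvFm A →
      IndAx (fmImp (substFm i .Zero A)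
        (fmImp (fmAll i (fmAll j (fmImp A (fmImp (substFm i (.Var j) A)
              (substFm i (.Eats (.Var i) (.Var j)) A)))))
          (fmAll i A)))

/-- The (sequent-style) HF calculus `H ⊢ A`. -/
inductive Thm : Set Fm → Fm → Prop where
  | hyp {H A} : A ∈ H → Thm H A
  | bool {H A} : BoolAx A → Thm H A
  | eq {H A} : EqAx A → Thm H A
  | spec {H A} : SpecAx A → Thm H A
  | hf {H A} : HFAx A → Thm H A
  | ind {H A} : IndAx A → Thm H A
  | mp {H H' A B} : Thm H (fmImp A B) → Thm H' A → Thm (H ∪ H') B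
  | exi {H A B i} : Thm H (fmImp A B) → i ∉ fvFm B → (∀ C ∈ H, i ∉ fvFm C) →
      Thm H (fmImp (.Ex i A) B)

/-- The standard model of HF set theory: natural numbers with Ackermann membership. -/
def memN (x y : ℕ) : Prop := Nat.testBit y x = true

/-- Evaluation of terms in the standard model, relative to an environment. -/
def evalTm (e : ℕ → ℕ) : Tm → ℕ
  | .Zero => 0
  | .Var k => e k
  | .Eats t u => evalTm e t ||| 2 ^ evalTm e u

/-- Evaluation (truth) of formulas in the standard model. -/
def evalFm (e : ℕ → ℕ) : Fm → Prop
  | .Mem t u => memN (evalTm e t) (evalTm e u)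
  | .Eq t u => evalTm e t = evalTm e u
  | .Disj A B => evalFm e A ∨ evalFm e B
  | .Neg A => ¬ evalFm e A
  | .Ex k A => ∃ x : ℕ, evalFm (Function.update e k x) A

/-- The null environment. -/
def e0 : ℕ → ℕ := fun _ => 0

/-- Strict Σ formulas. -/
inductive SsFm : Fm → Prop where
  | mem (i j : ℕ) : SsFm (.Mem (.Var i) (.Var j))
  | disj {A B} : SsFm A → SsFm B → SsFm (.Disj A B)
  | conj {A B} : SsFm A → SsFm B → SsFm (fmConj A B)
  | ex {A} (i : ℕ) : SsFm A → SsFm (.Ex i A)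
  | all2 {A} (i j : ℕ) : SsFm A → j ≠ i → j ∉ fvFm A → SsFm (fmAll2 i (.Var j) A)

/-- Σ formulas: provably equivalent to a strict Σ formula with no new free variables. -/
def SigmaFm (A : Fm) : Prop :=
  ∃ B, SsFm B ∧ fvFm B ⊆ fvFm A ∧ Thm ∅ (fmIff A B)

/-- α-equivalence of formulas. -/
inductive AEq : Fm → Fm → Prop where
  | mem (t u) : AEq (.Mem t u) (.Mem t u)
  | eq (t u) : AEq (.Eq t u) (.Eq t u)
  | disj {A A' B B'} : AEq A A' → AEq B B' → AEq (.Disj A B) (.Disj A' B')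
  | neg {A A'} : AEq A A' → AEq (.Neg A) (.Neg A')
  | ex {A B} (i j : ℕ) :
      (∀ k, k ∉ varsFm A → k ∉ varsFm B → k ≠ i → k ≠ j →
        AEq (substFm i (.Var k) A) (substFm j (.Var k) B)) →
      AEq (.Ex i A) (.Ex j B)

/-- De Bruijn terms. -/
inductive DbTm : Type where
  | DBZero : DbTm
  | DBVar : ℕ → DbTm
  | DBInd : ℕ → DbTm
  | DBEats : DbTm → DbTm → DbTm

/-- De Bruijn formulas. -/
inductive DbFm : Type where
  | DBMem : DbTm → DbTm → DbFm
  | DBEq : DbTm → DbTm → DbFm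
  | DBDisj : DbFm → DbFm → DbFm
  | DBNeg : DbFm → DbFm
  | DBEx : DbFm → DbFm

/-- Lookup of a name in a list of bound names, innermost first. -/
def lookup : List ℕ → ℕ → ℕ → DbTm
  | [], _, x => .DBVar x
  | y :: ys, n, x => if x = y then .DBInd n else lookup ys (n+1) x

/-- Translation of a term into de Bruijn form. -/
def transTm (e : List ℕ) : Tm → DbTm
  | .Zero => .DBZero
  | .Var k => lookup e 0 k
  | .Eats t u => .DBEats (transTm e t) (transTm e u)

/-- Translation of a formula into de Bruijn form. -/
def transFm (e : List ℕ) : Fm → DbFm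
  | .Mem t u => .DBMem (transTm e t) (transTm e u)
  | .Eq t u => .DBEq (transTm e t) (transTm e u)
  | .Disj A B => .DBDisj (transFm e A) (transFm e B)
  | .Neg A => .DBNeg (transFm e A)
  | .Ex k A => .DBEx (transFm (k :: e) A)

/-- Abstraction of a de Bruijn term over a name, at binding depth `k`. -/
def abstDbTm (v : ℕ) (k : ℕ) : DbTm → DbTm
  | .DBZero => .DBZero
  | .DBVar n => if n = v then .DBInd k else .DBVar n
  | .DBInd j => .DBInd j
  | .DBEats t u => .DBEats (abstDbTm v k t) (abstDbTm v k u)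

/-- Abstraction of a de Bruijn formula over a name. -/
def abstDbFm (v : ℕ) (k : ℕ) : DbFm → DbFm
  | .DBMem t u => .DBMem (abstDbTm v k t) (abstDbTm v k u)
  | .DBEq t u => .DBEq (abstDbTm v k t) (abstDbTm v k u)
  | .DBDisj A B => .DBDisj (abstDbFm v k A) (abstDbFm v k B)
  | .DBNeg A => .DBNeg (abstDbFm v k A)
  | .DBEx A => .DBEx (abstDbFm v (k+1) A)

/-- Well-formed de Bruijn terms (no indices at all). -/
inductive WfDbTm : DbTm → Prop where
  | zero : WfDbTm .DBZero
  | var (n : ℕ) : WfDbTm (.DBVar n)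
  | eats {t u} : WfDbTm t → WfDbTm u → WfDbTm (.DBEats t u)

/-- Well-formed de Bruijn formulas. -/
inductive WfDbFm : DbFm → Prop where
  | mem {t u} : WfDbTm t → WfDbTm u → WfDbFm (.DBMem t u)
  | eq {t u} : WfDbTm t → WfDbTm u → WfDbFm (.DBEq t u)
  | disj {A B} : WfDbFm A → WfDbFm B → WfDbFm (.DBDisj A B)
  | neg {A} : WfDbFm A → WfDbFm (.DBNeg A)
  | ex {A} (v : ℕ) : WfDbFm A → WfDbFm (.DBEx (abstDbFm v 0 A))

/-- Singleton `{x}` in the Ackermann model. -/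
def singN (x : ℕ) : ℕ := 2 ^ x
/-- Unordered pair `{x, y}`. -/
def upairN (x y : ℕ) : ℕ := 2 ^ x ||| 2 ^ y
/-- Kuratowski ordered pair `⟨x, y⟩ = {{x}, {x,y}}`. -/
def hpairN (x y : ℕ) : ℕ := upairN (singN x) (upairN x y)
/-- Von Neumann ordinals. -/
def ordN : ℕ → ℕ
  | 0 => 0
  | n+1 => ordN n ||| 2 ^ (ordN n)
/-- `htupleN n` is an `(n+2)`-tuple of zeros (right-nested pairs). -/
def htupleN : ℕ → ℕ
  | 0 => hpairN 0 0
  | n+1 => hpairN 0 (htupleN n)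

/-- Gödel coding of de Bruijn terms by HF sets. -/
def quotDbTm : DbTm → ℕ
  | .DBZero => 0
  | .DBVar n => ordN (n+1)
  | .DBInd k => hpairN (htupleN 6) (ordN k)
  | .DBEats t u => hpairN (htupleN 1) (hpairN (quotDbTm t) (quotDbTm u))

/-- Gödel coding of de Bruijn formulas by HF sets. -/
def quotDbFm : DbFm → ℕ
  | .DBMem t u => hpairN (htupleN 0) (hpairN (quotDbTm t) (quotDbTm u))
  | .DBEq t u => hpairN (htupleN 2) (hpairN (quotDbTm t) (quotDbTm u))
  | .DBDisj A B => hpairN (htupleN 3) (hpairN (quotDbFm A) (quotDbFm B))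
  | .DBNeg A => hpairN (htupleN 4) (quotDbFm A)
  | .DBEx A => hpairN (htupleN 5) (quotDbFm A)

/-- The code (as an HF set) of a term / of a formula. -/
def codeTmN (t : Tm) : ℕ := quotDbTm (transTm [] t)
def codeFmN (A : Fm) : ℕ := quotDbFm (transFm [] A)

/-- HF-term constructors for pairs, ordinals, tuples: the quotation `⌜·⌝` as a term. -/
def HPairT (x y : Tm) : Tm :=
  .Eats (.Eats .Zero (.Eats .Zero x)) (.Eats (.Eats .Zero x) y)
def OrdOfT : ℕ → Tm
  | 0 => .Zero
  | n+1 => .Eats (OrdOfT n) (OrdOfT n)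
def HTupleT : ℕ → Tm
  | 0 => HPairT .Zero .Zero
  | n+1 => HPairT .Zero (HTupleT n)

def quotDbTmT : DbTm → Tm
  | .DBZero => .Zero
  | .DBVar n => OrdOfT (n+1)
  | .DBInd k => HPairT (HTupleT 6) (OrdOfT k)
  | .DBEats t u => HPairT (HTupleT 1) (HPairT (quotDbTmT t) (quotDbTmT u))

def quotDbFmT : DbFm → Tm
  | .DBMem t u => HPairT (HTupleT 0) (HPairT (quotDbTmT t) (quotDbTmT u))
  | .DBEq t u => HPairT (HTupleT 2) (HPairT (quotDbTmT t) (quotDbTmT u))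
  | .DBDisj A B => HPairT (HTupleT 3) (HPairT (quotDbFmT A) (quotDbFmT B))
  | .DBNeg A => HPairT (HTupleT 4) (quotDbFmT A)
  | .DBEx A => HPairT (HTupleT 5) (quotDbFmT A)

/-- The Gödel-code term `⌜t⌝` of a term, and `⌜A⌝` of a formula. -/
def qTm (t : Tm) : Tm := quotDbTmT (transTm [] t)
def qFm (A : Fm) : Tm := quotDbFmT (transFm [] A)

/-- `Q_Imp x y`: the HF term constructing the code of an implication
(implication `A → B` being `¬A ∨ B`). -/
def QImp (x y : Tm) : Tm := HPairT (HTupleT 3) (HPairT (HPairT (HTupleT 4) x) y)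

/-- The shadow provability predicate: `x` is the code of a theorem. -/
def PfShadow (x : ℕ) : Prop := ∃ A : Fm, x = codeFmN A ∧ Thm ∅ A

/-- `Pf` is a provability predicate: a Σ formula with only the free variable `0`
whose standard semantics is provability of the coded formula. -/
def IsProvabilityPred (Pf : Fm) : Prop :=
  SigmaFm Pf ∧ fvFm Pf ⊆ {0} ∧
  ∀ x : ℕ, (evalFm (Function.update e0 0 x) Pf ↔ PfShadow x)

/-- Application of a provability predicate to a (code) term: `PfP t`. -/
def PfApp (Pf : Fm) (t : Tm) : Fm := substFm 0 t Pf

/-- `qEatsN v w` is the code of an `Eats` term from the codes of its components. -/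
def qEatsN (v w : ℕ) : ℕ := hpairN (htupleN 1) (hpairN v w)

/-- `s` is (the graph of) a single-valued sequence. -/
def IsFunN (s : ℕ) : Prop :=
  ∀ x y y', memN (hpairN x y) s → memN (hpairN x y') s → y = y'

/-- `SeqConst s k t`: `s` is a sequence of length at least `k+1` witnessing the
buildup of the constant term coded by `t = s_k`: every element is `0` or obtained
from two earlier elements by `q_Eats`. -/
def SeqConst (s k t : ℕ) : Prop :=
  IsFunN s ∧ memN (hpairN (ordN k) t) s ∧
  ∀ l y, l ≤ k → memN (hpairN (ordN l) y) s →
    y = 0 ∨ ∃ m n v w, m < l ∧ n < l ∧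
      memN (hpairN (ordN m) v) s ∧ memN (hpairN (ordN n) w) s ∧ y = qEatsN v w

/-- The shadow predicate for constant (variable-free) terms. -/
def ConstN (t : ℕ) : Prop := ∃ s k, SeqConst s k t

/-!
A constant term is built from `0` by `Eats`, so listing the codes of all its subterms in
postorder gives a build sequence for its code: every entry is `0` or `q_Eats` of two earlier
entries. Conversely, strong induction along a build sequence reads off a constant term for
each entry. On the HF side, a list is turned into the graph `{⟨i, L_i⟩}` of a sequence, which
is single-valued because Kuratowski pairs and von Neumann ordinals are injective.
-/

theorem memN_or {z a b : ℕ} : memN z (a ||| b) ↔ memN z a ∨ memN z b := by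
  simp [memN, Nat.testBit_or]

theorem memN_two_pow {z b : ℕ} : memN z (2 ^ b) ↔ z = b := by
  simp [memN, Nat.testBit_two_pow, eq_comm]

theorem memN_upairN {z x y : ℕ} : memN z (upairN x y) ↔ z = x ∨ z = y := by
  simp [upairN, memN_or, memN_two_pow]

theorem memN_singN {z x : ℕ} : memN z (singN x) ↔ z = x := memN_two_pow

theorem singN_injective : Function.Injective singN :=
  fun _ _ h => memN_singN.mp (h ▸ memN_singN.mpr rfl)

theorem upairN_eq_upairN {x y a b : ℕ} (h : upairN x y = upairN a b) :
    (x = a ∧ y = b) ∨ (x = b ∧ y = a) := by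
  have hx : x = a ∨ x = b := memN_upairN.mp (h ▸ memN_upairN.mpr (Or.inl rfl))
  have hy : y = a ∨ y = b := memN_upairN.mp (h ▸ memN_upairN.mpr (Or.inr rfl))
  have ha : a = x ∨ a = y := memN_upairN.mp (h.symm ▸ memN_upairN.mpr (Or.inl rfl))
  have hb : b = x ∨ b = y := memN_upairN.mp (h.symm ▸ memN_upairN.mpr (Or.inr rfl))
  omega

theorem upairN_eq_singN {x y a : ℕ} (h : upairN x y = singN a) : x = a ∧ y = a :=
  ⟨memN_singN.mp (h ▸ memN_upairN.mpr (Or.inl rfl)),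
    memN_singN.mp (h ▸ memN_upairN.mpr (Or.inr rfl))⟩

theorem hpairN_inj {x y a b : ℕ} (h : hpairN x y = hpairN a b) : x = a ∧ y = b := by
  rcases upairN_eq_upairN h with ⟨hsing, hupair⟩ | ⟨hsing, hupair⟩
  · obtain rfl := singN_injective hsing
    rcases upairN_eq_upairN hupair with ⟨-, hy⟩ | ⟨hx, hy⟩ <;> omega
  · obtain ⟨rfl, rfl⟩ := upairN_eq_singN hsing.symm
    obtain ⟨-, rfl⟩ := upairN_eq_singN hupair
    exact ⟨rfl, rfl⟩

theorem ordN_strictMono : StrictMono ordN :=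
  strictMono_nat_of_lt_succ fun n =>
    Nat.lt_two_pow_self.trans_le (Nat.right_le_or : 2 ^ ordN n ≤ ordN (n + 1))

def graphN (f : ℕ → ℕ) : ℕ → ℕ
  | 0 => 0
  | n + 1 => graphN f n ||| 2 ^ hpairN (ordN n) (f n)

theorem memN_graphN {f : ℕ → ℕ} {n z : ℕ} :
    memN z (graphN f n) ↔ ∃ i < n, z = hpairN (ordN i) (f i) := by
  induction n with
  | zero => simp [graphN, memN]
  | succ n ih =>
    simp only [graphN, memN_or, memN_two_pow, ih, Nat.lt_succ_iff_lt_or_eq, or_and_right,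
      exists_or, exists_eq_left]

theorem hpairN_ordN_mem_graphN {f : ℕ → ℕ} {n l y : ℕ} :
    memN (hpairN (ordN l) y) (graphN f n) ↔ l < n ∧ y = f l := by
  rw [memN_graphN]
  constructor
  · rintro ⟨i, hi, h⟩
    obtain ⟨hl, rfl⟩ := hpairN_inj h
    obtain rfl := ordN_strictMono.injective hl
    exact ⟨hi, rfl⟩
  · rintro ⟨hl, rfl⟩
    exact ⟨l, hl, rfl⟩

theorem isFunN_graphN (f : ℕ → ℕ) (n : ℕ) : IsFunN (graphN f n) := by
  intro x y y' h h'
  obtain ⟨i, -, hi⟩ := memN_graphN.mp h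
  obtain ⟨i', -, hi'⟩ := memN_graphN.mp h'
  obtain ⟨rfl, rfl⟩ := hpairN_inj hi
  obtain ⟨hii', rfl⟩ := hpairN_inj hi'
  rw [ordN_strictMono.injective hii']

inductive ConstBuild : List ℕ → Prop where
  | nil : ConstBuild []
  | snoc {L y} : ConstBuild L → (y = 0 ∨ ∃ v ∈ L, ∃ w ∈ L, y = qEatsN v w) →
      ConstBuild (L ++ [y])

namespace ConstBuild

theorem append {L M : List ℕ} (hL : ConstBuild L) (hM : ConstBuild M) :
    ConstBuild (L ++ M) := by
  induction hM with
  | nil => simpa using hL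
  | @snoc M y _ hy ih =>
    rw [← List.append_assoc]
    refine ih.snoc (hy.imp_right ?_)
    rintro ⟨v, hv, w, hw, hvw⟩
    exact ⟨v, List.mem_append_right L hv, w, List.mem_append_right L hw, hvw⟩

theorem getElem {L : List ℕ} (hL : ConstBuild L) {l : ℕ} (hl : l < L.length) :
    L[l] = 0 ∨ ∃ v ∈ L.take l, ∃ w ∈ L.take l, L[l] = qEatsN v w := by
  induction hL with
  | nil => simp at hl
  | @snoc L y _ hy ih =>
    rcases Nat.lt_succ_iff_lt_or_eq.mp (by simpa using hl) with hl | rfl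
    · simpa [List.getElem_append_left hl, List.take_append_of_le_length hl.le] using ih hl
    · simpa using hy

theorem seqConst_graphN {L : List ℕ} (hL : ConstBuild L) {k : ℕ}
    (hk : k < L.length) : SeqConst (graphN (L.getD · 0) L.length) k L[k] := by
  have mem_graph : ∀ {m} (hm : m < L.length),
      memN (hpairN (ordN m) L[m]) (graphN (L.getD · 0) L.length) := fun hm =>
    hpairN_ordN_mem_graphN.mpr ⟨hm, (List.getD_eq_getElem _ _ hm).symm⟩
  have mem_take : ∀ {l v}, v ∈ L.take l →
      ∃ m < l, memN (hpairN (ordN m) v) (graphN (L.getD · 0) L.length) := by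
    intro l v hv
    obtain ⟨m, hm, rfl⟩ := List.mem_take_iff_getElem.mp hv
    exact ⟨m, (lt_min_iff.mp hm).1, mem_graph _⟩
  refine ⟨isFunN_graphN _ _, mem_graph hk, fun l y _ hy => ?_⟩
  obtain ⟨hl, rfl⟩ := hpairN_ordN_mem_graphN.mp hy
  rw [List.getD_eq_getElem _ _ hl]
  refine (hL.getElem hl).imp_right ?_
  rintro ⟨v, hv, w, hw, hvw⟩
  obtain ⟨m, hm, hmv⟩ := mem_take hv
  obtain ⟨n, hn, hnw⟩ := mem_take hw
  exact ⟨m, n, v, w, hm, hn, hmv, hnw, hvw⟩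

end ConstBuild

theorem exists_constBuild_mem_of_fvTm_eq_empty {t : Tm} (ht : fvTm t = ∅) :
    ∃ L, ConstBuild L ∧ codeTmN t ∈ L := by
  induction t with
  | Zero => exact ⟨[0], ConstBuild.nil.snoc (Or.inl rfl), List.mem_singleton_self _⟩
  | Var k => simp [fvTm] at ht
  | Eats a b iha ihb =>
    obtain ⟨hta, htb⟩ := Finset.union_eq_empty.mp ht
    obtain ⟨La, hLa, ha⟩ := iha hta
    obtain ⟨Lb, hLb, hb⟩ := ihb htb
    refine ⟨La ++ Lb ++ [codeTmN (.Eats a b)], (hLa.append hLb).snoc (Or.inr ?_), by simp⟩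
    exact ⟨_, List.mem_append_left Lb ha, _, List.mem_append_right La hb, rfl⟩

theorem exists_fvTm_eq_empty_of_seqConst {s k x : ℕ} (h : SeqConst s k x) :
    ∃ t : Tm, fvTm t = ∅ ∧ x = codeTmN t := by
  obtain ⟨-, hx, hbuild⟩ := h
  suffices ∀ l ≤ k, ∀ y, memN (hpairN (ordN l) y) s → ∃ t : Tm, fvTm t = ∅ ∧ y = codeTmN t from
    this k le_rfl x hx
  intro l
  induction l using Nat.strong_induction_on with
  | _ l ih =>
    intro hl y hy
    rcases hbuild l y hl hy with rfl | ⟨m, n, v, w, hm, hn, hv, hw, hvw⟩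
    · exact ⟨.Zero, rfl, rfl⟩
    · obtain ⟨a, ha, rfl⟩ := ih m hm (hm.le.trans hl) v hv
      obtain ⟨b, hb, rfl⟩ := ih n hn (hn.le.trans hl) w hw
      exact ⟨.Eats a b, by simp [fvTm, ha, hb], hvw⟩

/-- Correctness of the constant-term coding predicate: `Const x` holds iff `x` is
the code of a variable-free term. -/
theorem Const_correct (x : ℕ) :
    ConstN x ↔ ∃ t : Tm, fvTm t = ∅ ∧ x = codeTmN t := by
  constructor
  · rintro ⟨s, k, h⟩
    exact exists_fvTm_eq_empty_of_seqConst h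
  · rintro ⟨t, ht, rfl⟩
    obtain ⟨L, hL, ht_mem⟩ := exists_constBuild_mem_of_fvTm_eq_empty ht
    obtain ⟨k, hk, hkt⟩ := List.getElem_of_mem ht_mem
    exact ⟨_, k, hkt ▸ hL.seqConst_graphN hk⟩
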